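/- For a ∈ (1,2], set γ(a) = Γ(a)²/Γ(2a-1). Then γ is strictly decreasing on [1,2], γ(1) = 1, γ(2) = 1/2, and γ(a) ∈ [1/2, 1) for a ∈ (1,2]. -/

import Mathlib

/-!
`log Γ` is strictly convex on `(0, ∞)`, so its secant slopes strictly increase when the secant
moves to the right. For `1 ≤ a < b` the interval `[2a - 1, 2b - 1]` lies to the right of `[a, b]`
and is twice as long, hence `2 (log Γ b - log Γ a) < log Γ (2b - 1) - log Γ (2a - 1)`, which is
`log γ(b) < log γ(a)`.
-/

open Set Real

section slope

variable {𝕜 : Type*} [Field 𝕜] [LinearOrder 𝕜] [IsStrictOrderedRing 𝕜] {s : Set 𝕜} {f : 𝕜 → 𝕜}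

theorem StrictConvexOn.slope_lt_slope (hf : StrictConvexOn 𝕜 s f) {x y x' y' : 𝕜}
    (hx : x ∈ s) (hy : y ∈ s) (hx' : x' ∈ s) (hy' : y' ∈ s)
    (hxy : x < y) (hx'y' : x' < y') (hxx' : x ≤ x') (hyy' : y < y') :
    slope f x y < slope f x' y' := by
  have hxy' : x < y' := hxy.trans hyy'
  calc slope f x y < slope f x y' := by
        simpa only [slope_def_field] using
          hf.secant_strict_mono hx hy hy' hxy.ne' hxy'.ne' hyy'
    _ = slope f y' x := slope_comm f x y'
    _ ≤ slope f y' x' := hf.convexOn.slope_mono hy' ⟨hx, hxy'.ne⟩ ⟨hx', hx'y'.ne⟩ hxx'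
    _ = slope f x' y' := slope_comm f y' x'

end slope

namespace Real

/-- `log Γ x = log Γ (x + 1) - log x` is a convex function plus a strictly convex one. -/
theorem strictConvexOn_log_Gamma : StrictConvexOn ℝ (Ioi 0) (log ∘ Gamma) := by
  have hshift : ConvexOn ℝ (Ioi 0) fun x : ℝ => log (Gamma (x + 1)) :=
    (convexOn_log_Gamma.translate_left 1).subset
      (fun x (hx : 0 < x) => show 0 < 1 + x by linarith) (convex_Ioi 0)
  refine (hshift.add_strictConvexOn strictConcaveOn_log_Ioi.neg).congr fun x (hx : 0 < x) => ?_
  simp only [Pi.add_apply, Pi.neg_apply, Function.comp_apply]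
  rw [Gamma_add_one hx.ne', log_mul hx.ne' (Gamma_pos_of_pos hx).ne']
  ring

theorem log_Gamma_sq_div_Gamma_two_mul_sub_one {a : ℝ} (ha : 1 / 2 < a) :
    log (Gamma a ^ 2 / Gamma (2 * a - 1)) = 2 * log (Gamma a) - log (Gamma (2 * a - 1)) := by
  rw [log_div (pow_ne_zero 2 (Gamma_pos_of_pos (by linarith)).ne')
    (Gamma_pos_of_pos (by linarith)).ne', log_pow, Nat.cast_ofNat]

theorem strictAntiOn_Gamma_sq_div_Gamma_two_mul_sub_one :
    StrictAntiOn (fun a : ℝ => Gamma a ^ 2 / Gamma (2 * a - 1)) (Ici 1) := by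
  intro a (ha : 1 ≤ a) b (hb : 1 ≤ b) hab
  have hslope : slope (log ∘ Gamma) a b < slope (log ∘ Gamma) (2 * a - 1) (2 * b - 1) :=
    strictConvexOn_log_Gamma.slope_lt_slope (mem_Ioi.2 (by linarith)) (mem_Ioi.2 (by linarith))
      (mem_Ioi.2 (by linarith)) (mem_Ioi.2 (by linarith)) hab (by linarith) (by linarith)
      (by linarith)
  rw [slope_def_field, slope_def_field, div_lt_div_iff₀ (by linarith) (by linarith)] at hslope
  simp only [Function.comp_apply] at hslope
  have hlog : 2 * (log (Gamma b) - log (Gamma a)) <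
      log (Gamma (2 * b - 1)) - log (Gamma (2 * a - 1)) := by
    nlinarith [sub_pos.2 hab]
  have hpos : ∀ x : ℝ, 1 ≤ x → 0 < Gamma x ^ 2 / Gamma (2 * x - 1) := fun x hx =>
    div_pos (pow_pos (Gamma_pos_of_pos (by linarith)) 2) (Gamma_pos_of_pos (by linarith))
  rw [← log_lt_log_iff (hpos b hb) (hpos a ha),
    log_Gamma_sq_div_Gamma_two_mul_sub_one (by linarith),
    log_Gamma_sq_div_Gamma_two_mul_sub_one (by linarith)]
  linarith

end Real

/-- The function `γ(a) = Γ(a)²/Γ(2a-1)` (the probability `P(b₁ < 0)` of leftward bias)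
is strictly decreasing on `[1,2]`, with `γ(1) = 1`, `γ(2) = 1/2`, and
`γ(a) ∈ [1/2, 1)` for `a ∈ (1,2]`. -/
theorem gamma_ratio_strictAnti :
    StrictAntiOn (fun a : ℝ => Real.Gamma a ^ 2 / Real.Gamma (2 * a - 1)) (Icc 1 2)
    ∧ Real.Gamma (1 : ℝ) ^ 2 / Real.Gamma (2 * (1 : ℝ) - 1) = 1
    ∧ Real.Gamma (2 : ℝ) ^ 2 / Real.Gamma (2 * (2 : ℝ) - 1) = 1 / 2
    ∧ ∀ a ∈ Ioc (1 : ℝ) 2,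
        Real.Gamma a ^ 2 / Real.Gamma (2 * a - 1) ∈ Ico (1 / 2 : ℝ) 1 := by
  have hanti : StrictAntiOn (fun a : ℝ => Real.Gamma a ^ 2 / Real.Gamma (2 * a - 1)) (Icc 1 2) :=
    Real.strictAntiOn_Gamma_sq_div_Gamma_two_mul_sub_one.mono Icc_subset_Ici_self
  have hγ1 : Real.Gamma (1 : ℝ) ^ 2 / Real.Gamma (2 * (1 : ℝ) - 1) = 1 := by norm_num
  have hγ2 : Real.Gamma (2 : ℝ) ^ 2 / Real.Gamma (2 * (2 : ℝ) - 1) = 1 / 2 := by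
    norm_num [Real.Gamma_two, Real.Gamma_ofNat_eq_factorial]
  refine ⟨hanti, hγ1, hγ2, fun a ⟨ha1, ha2⟩ => ⟨?_, ?_⟩⟩
  · exact hγ2.symm.trans_le (hanti.antitoneOn ⟨ha1.le, ha2⟩ ⟨one_le_two, le_rfl⟩ ha2)
  · exact (hanti ⟨le_rfl, one_le_two⟩ ⟨ha1.le, ha2⟩ ha1).trans_eq hγ1
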